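/- Let c₁, c₂ > 0 and p₁ > p₂ > 0 be real numbers. Then the equation x^{p₁} - c₁·x^{p₂} - c₂ = 0 has a unique positive root x*, and moreover x* ≤ max{(2c₁)^{1/(p₁-p₂)}, (2c₂)^{1/p₁}}. -/
import Mathlib

open Real

lemma root_rel (c₁ c₂ p₁ p₂ x : ℝ) (hx : 0 < x)
    (h : x ^ p₁ - c₁ * x ^ p₂ - c₂ = 0) :
    x ^ (p₁ - p₂) = c₁ + c₂ * x ^ (-p₂) := by
  have h1 : x ^ p₁ = c₁ * x ^ p₂ + c₂ := by linarith
  have h2 : x ^ (p₁ - p₂) = x ^ p₁ * x ^ (-p₂) := by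
    rw [← Real.rpow_add hx]; ring_nf
  have h3 : x ^ p₂ * x ^ (-p₂) = 1 := by
    rw [← Real.rpow_add hx]; simp
  rw [h2, h1]; linear_combination c₁ * h3

lemma big_pos (c₁ c₂ p₁ p₂ x : ℝ) (hc₁ : 0 < c₁) (hc₂ : 0 < c₂)
    (hp₂ : 0 < p₂) (hp : p₂ < p₁)
    (hx : max ((2 * c₁) ^ (1 / (p₁ - p₂))) ((2 * c₂) ^ (1 / p₁)) < x) :
    0 < x ^ p₁ - c₁ * x ^ p₂ - c₂ := by
  have hd : 0 < p₁ - p₂ := by linarith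
  have hp₁ : 0 < p₁ := by linarith
  have h0 : (0:ℝ) ≤ 2 * c₁ := by linarith
  have hxpos : 0 < x := lt_of_le_of_lt (Real.rpow_nonneg h0 (1 / (p₁ - p₂))) (lt_of_le_of_lt (le_max_left _ _) hx)
  have h1 : 2 * c₁ < x ^ (p₁ - p₂) := by
    have := Real.rpow_lt_rpow (Real.rpow_nonneg (by linarith : (0:ℝ) ≤ 2 * c₁) _)
      (lt_of_le_of_lt (le_max_left _ _) hx) hd
    rwa [← Real.rpow_mul (by linarith), one_div, inv_mul_cancel₀ hd.ne', Real.rpow_one] at this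
  have h2 : 2 * c₂ < x ^ p₁ := by
    have := Real.rpow_lt_rpow (Real.rpow_nonneg (by linarith : (0:ℝ) ≤ 2 * c₂) _)
      (lt_of_le_of_lt (le_max_right _ _) hx) hp₁
    rwa [← Real.rpow_mul (by linarith), one_div, inv_mul_cancel₀ hp₁.ne', Real.rpow_one] at this
  have h3 : x ^ (p₁ - p₂) * x ^ p₂ = x ^ p₁ := by
    rw [← Real.rpow_add hxpos]; ring_nf
  have h4 : 0 < x ^ p₂ := Real.rpow_pos_of_pos hxpos _
  nlinarith

/-- Uniqueness of the positive root of `x^{p₁} - c₁ x^{p₂} - c₂ = 0` and the bound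
`x* ≤ max{(2c₁)^{1/(p₁-p₂)}, (2c₂)^{1/p₁}}`. -/
theorem stmt0 (c₁ c₂ p₁ p₂ : ℝ) (hc₁ : 0 < c₁) (hc₂ : 0 < c₂)
    (hp₂ : 0 < p₂) (hp : p₂ < p₁) :
    (∃! x : ℝ, 0 < x ∧ x ^ p₁ - c₁ * x ^ p₂ - c₂ = 0) ∧
    (∀ x : ℝ, 0 < x → x ^ p₁ - c₁ * x ^ p₂ - c₂ = 0 →
      x ≤ max ((2 * c₁) ^ (1 / (p₁ - p₂))) ((2 * c₂) ^ (1 / p₁))) := by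
  have hp₁ : 0 < p₁ := by linarith
  have hd : 0 < p₁ - p₂ := by linarith
  set M := max ((2 * c₁) ^ (1 / (p₁ - p₂))) ((2 * c₂) ^ (1 / p₁)) with hM
  have hMpos : 0 < M := lt_of_lt_of_le (Real.rpow_pos_of_pos (by linarith) _) (le_max_left _ _)
  -- bound
  have hbound : ∀ x : ℝ, 0 < x → x ^ p₁ - c₁ * x ^ p₂ - c₂ = 0 → x ≤ M := by
    intro x hx hroot
    by_contra hgt
    push_neg at hgt
    have := big_pos c₁ c₂ p₁ p₂ x hc₁ hc₂ hp₂ hp hgt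
    linarith
  -- uniqueness
  have huniq : ∀ x y : ℝ, 0 < x → 0 < y →
      x ^ p₁ - c₁ * x ^ p₂ - c₂ = 0 → y ^ p₁ - c₁ * y ^ p₂ - c₂ = 0 → x = y := by
    intro x y hx hy hrx hry
    have key : ∀ a b : ℝ, 0 < a → 0 < b → a < b →
        a ^ p₁ - c₁ * a ^ p₂ - c₂ = 0 → b ^ p₁ - c₁ * b ^ p₂ - c₂ = 0 → False := by
      intro a b ha hb hab hra hrb
      have h1 := root_rel c₁ c₂ p₁ p₂ a ha hra
      have h2 := root_rel c₁ c₂ p₁ p₂ b hb hrb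
      have h3 : a ^ (p₁ - p₂) < b ^ (p₁ - p₂) := Real.rpow_lt_rpow ha.le hab hd
      have h4 : b ^ (-p₂) < a ^ (-p₂) := Real.rpow_lt_rpow_of_neg ha hab (by linarith)
      nlinarith
    rcases lt_trichotomy x y with h | h | h
    · exact absurd (key x y hx hy h hrx hry) not_false
    · exact h
    · exact absurd (key y x hy hx h hry hrx) not_false
  -- existence via IVT
  set ε := min 1 (c₂ ^ (1 / p₁)) with hε
  have hεpos : 0 < ε := lt_min one_pos (Real.rpow_pos_of_pos hc₂ _)
  have hεle : ε ≤ M + 1 := by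
    have : ε ≤ 1 := min_le_left _ _
    linarith
  have hfε : ε ^ p₁ - c₁ * ε ^ p₂ - c₂ ≤ 0 := by
    have h1 : ε ^ p₁ ≤ c₂ := by
      have := Real.rpow_le_rpow hεpos.le (min_le_right 1 (c₂ ^ (1 / p₁))) hp₁.le
      rwa [← Real.rpow_mul hc₂.le, one_div, inv_mul_cancel₀ hp₁.ne', Real.rpow_one] at this
    have h2 : 0 < c₁ * ε ^ p₂ := mul_pos hc₁ (Real.rpow_pos_of_pos hεpos _)
    linarith
  have hfX : 0 ≤ (M + 1) ^ p₁ - c₁ * (M + 1) ^ p₂ - c₂ :=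
    (big_pos c₁ c₂ p₁ p₂ (M + 1) hc₁ hc₂ hp₂ hp (by linarith)).le
  have hcont : ContinuousOn (fun x : ℝ => x ^ p₁ - c₁ * x ^ p₂ - c₂) (Set.Icc ε (M + 1)) := by
    apply ContinuousOn.sub
    apply ContinuousOn.sub
    · intro x hx
      exact (Real.continuousAt_rpow_const x p₁ (Or.inl (by nlinarith [hx.1] : x ≠ 0))).continuousWithinAt
    · apply ContinuousOn.mul continuousOn_const
      intro x hx
      exact (Real.continuousAt_rpow_const x p₂ (Or.inl (by nlinarith [hx.1] : x ≠ 0))).continuousWithinAt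
    · exact continuousOn_const
  have hmem : (0 : ℝ) ∈ Set.Icc (ε ^ p₁ - c₁ * ε ^ p₂ - c₂) ((M + 1) ^ p₁ - c₁ * (M + 1) ^ p₂ - c₂) :=
    ⟨hfε, hfX⟩
  obtain ⟨x₀, hx₀mem, hx₀⟩ := intermediate_value_Icc hεle hcont hmem
  have hx₀pos : 0 < x₀ := lt_of_lt_of_le hεpos hx₀mem.1
  refine ⟨⟨x₀, ⟨hx₀pos, hx₀⟩, ?_⟩, hbound⟩
  rintro y ⟨hy, hry⟩
  exact huniq y x₀ hy hx₀pos hry hx₀
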